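/- There exists a parameterized vector game G = (A,B,F) such that for all k_s,k_e ∈ ℕ, (k_s,k_e,0) ∈ Win(G) if and only if k_s ≥ k_e; consequently Win(G) has no cutoff with respect to (ℕ,ℕ,{0}). -/

import Mathlib

namespace PSyn

/-! ### Basic objects: types, alphabets, processes, events, executions -/

/-- The three process types: system, environment, mixed. -/
inductive PType where
  | s | e | se
deriving DecidableEq

/-- A finite alphabet: letters are the naturals `0, …, n-1`;
`sys a = true` means `a` is a system action (`a ∈ A_s`), otherwise `a ∈ A_e`. -/
structure Alphabet where
  n : ℕ
  sys : ℕ → Bool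

/-- An event is a pair (letter, process identity). -/
abbrev Event := ℕ × ℕ

/-- A process triple `P = (P_s, P_e, P_se)`: pairwise disjoint finite sets of processes. -/
structure ProcTriple where
  Ps : Finset ℕ
  Pe : Finset ℕ
  Pse : Finset ℕ
  disj_se : Disjoint Ps Pe
  disj_sse : Disjoint Ps Pse
  disj_ese : Disjoint Pe Pse

def ProcTriple.ofType (P : ProcTriple) : PType → Finset ℕ
  | .s => P.Ps
  | .e => P.Pe
  | .se => P.Pse

def ProcTriple.all (P : ProcTriple) : Finset ℕ := P.Ps ∪ P.Pe ∪ P.Pse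

/-- `σ ∈ Σ_s = A_s × (P_s ∪ P_se)`. -/
def isSysEvent (Alph : Alphabet) (P : ProcTriple) (σ : Event) : Prop :=
  σ.1 < Alph.n ∧ Alph.sys σ.1 = true ∧ (σ.2 ∈ P.Ps ∨ σ.2 ∈ P.Pse)

/-- `σ ∈ Σ_e = A_e × (P_e ∪ P_se)`. -/
def isEnvEvent (Alph : Alphabet) (P : ProcTriple) (σ : Event) : Prop :=
  σ.1 < Alph.n ∧ Alph.sys σ.1 = false ∧ (σ.2 ∈ P.Pe ∨ σ.2 ∈ P.Pse)

def isEvent (Alph : Alphabet) (P : ProcTriple) (σ : Event) : Prop :=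
  isSysEvent Alph P σ ∨ isEnvEvent Alph P σ

/-- A finite or infinite word over events. -/
inductive Exec where
  | fin : List Event → Exec
  | inf : (ℕ → Event) → Exec

/-- A `P`-execution: every event is an event of `P` over the alphabet. -/
def Exec.valid (Alph : Alphabet) (P : ProcTriple) : Exec → Prop
  | .fin l => ∀ σ ∈ l, isEvent Alph P σ
  | .inf g => ∀ i, isEvent Alph P (g i)

def Exec.at? : Exec → ℕ → Option Event
  | .fin l, i => l[i]?
  | .inf g, i => some (g i)

/-- The set of positions of an execution. -/
def Exec.posDom : Exec → ℕ → Prop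
  | .fin l, i => i < l.length
  | .inf _, _ => True

/-- Elements of the structure associated with `(P, w)`:
`inl p` is a process, `inr i` is a position. -/
abbrev Elem := ℕ ⊕ ℕ

/-- The universe `P ⊎ Pos(w)`. -/
def elemDom (P : ProcTriple) (w : Exec) : Elem → Prop
  | .inl p => p ∈ P.all
  | .inr i => w.posDom i

/-- The process an element belongs to (a process belongs to itself; a position
to the process executing it).  Two elements are `∼`-equivalent iff they have
the same process. -/
def procOf (w : Exec) : Elem → Option ℕ
  | .inl p => some p
  | .inr i => (w.at? i).map Prod.snd

def letterOf (w : Exec) : Elem → Option ℕ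
  | .inl _ => none
  | .inr i => (w.at? i).map Prod.fst

/-! ### First-order logic FO_A[∼,<,+1] -/

/-- Syntax of `FO_A[∼,<,+1]`; variables are naturals, letters are naturals. -/
inductive FO where
  | ptype : PType → ℕ → FO
  | letter : ℕ → ℕ → FO
  | eq : ℕ → ℕ → FO
  | sim : ℕ → ℕ → FO
  | lt : ℕ → ℕ → FO
  | succ : ℕ → ℕ → FO
  | not : FO → FO
  | or : FO → FO → FO
  | ex : ℕ → FO → FO

/-- Satisfaction of a formula in the structure `S_(P,w)` under a valuation. -/
def Sat (P : ProcTriple) (w : Exec) : (ℕ → Elem) → FO → Prop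
  | v, .ptype θ x => ∃ p, v x = Sum.inl p ∧ p ∈ P.ofType θ
  | v, .letter a x => letterOf w (v x) = some a
  | v, .eq x y => v x = v y
  | v, .sim x y => (procOf w (v x)).isSome ∧ procOf w (v x) = procOf w (v y)
  | v, .lt x y => ∃ i j, v x = Sum.inr i ∧ v y = Sum.inr j ∧ i < j ∧ w.posDom j
  | v, .succ x y => ∃ i, v x = Sum.inr i ∧ v y = Sum.inr (i + 1) ∧ w.posDom (i + 1)
  | v, .not φ => ¬ Sat P w v φ
  | v, .or φ ψ => Sat P w v φ ∨ Sat P w v ψ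
  | v, .ex x φ => ∃ u : Elem, elemDom P w u ∧ Sat P w (Function.update v x u) φ

/-- Satisfaction for sentences: `(P,w) ⊨ φ` (the valuation is irrelevant for sentences). -/
def SatS (P : ProcTriple) (w : Exec) (φ : FO) : Prop :=
  Sat P w (fun _ => Sum.inl 0) φ

def FO.free : FO → Finset ℕ
  | .ptype _ x => {x}
  | .letter _ x => {x}
  | .eq x y => {x, y}
  | .sim x y => {x, y}
  | .lt x y => {x, y}
  | .succ x y => {x, y}
  | .not φ => φ.free
  | .or φ ψ => φ.free ∪ ψ.free
  | .ex x φ => φ.free.erase x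

/-- A sentence has no free variables. -/
def FO.isSentence (φ : FO) : Prop := φ.free = ∅

def FO.vars : FO → Finset ℕ
  | .ptype _ x => {x}
  | .letter _ x => {x}
  | .eq x y => {x, y}
  | .sim x y => {x, y}
  | .lt x y => {x, y}
  | .succ x y => {x, y}
  | .not φ => φ.vars
  | .or φ ψ => φ.vars ∪ ψ.vars
  | .ex x φ => insert x φ.vars

/-- The two-variable fragment: only the variable names `0` and `1` are used. -/
def FO.twoVar (φ : FO) : Prop := φ.vars ⊆ ({0, 1} : Finset ℕ)

/-- The fragment `FO_A[∼]`: neither `<` nor `+1` occurs. -/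
def FO.onlySim : FO → Prop
  | .lt _ _ => False
  | .succ _ _ => False
  | .not φ => φ.onlySim
  | .or φ ψ => φ.onlySim ∧ ψ.onlySim
  | .ex _ φ => φ.onlySim
  | _ => True

/-! ### The asynchronous synthesis game and `Win(φ)` -/

/-- A `P`-strategy for System: `none` plays ε, `some σ` proposes the system event `σ`. -/
abbrev Strategy := List Event → Option Event

/-- The strategy only proposes system events (its codomain is `Σ_s ∪ {ε}`). -/
def properStrategy (Alph : Alphabet) (P : ProcTriple) (f : Strategy) : Prop :=
  ∀ u σ, f u = some σ → isSysEvent Alph P σ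

/-- The prefix of length `i` of an execution. -/
def Exec.pre : Exec → ℕ → List Event
  | .fin l, i => l.take i
  | .inf g, i => (List.range i).map g

/-- `w` is `f`-compatible: every system event of `w` is the one proposed by `f`. -/
def compatible (Alph : Alphabet) (P : ProcTriple) (f : Strategy) (w : Exec) : Prop :=
  ∀ i σ, w.at? i = some σ → isSysEvent Alph P σ → f (w.pre i) = some σ

/-- `w` is `f`-fair. -/
def fair (Alph : Alphabet) (P : ProcTriple) (f : Strategy) : Exec → Prop
  | .fin l => f l = none
  | .inf g =>
      {i : ℕ | f (Exec.pre (Exec.inf g) i) ≠ none}.Infinite →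
      {j : ℕ | isSysEvent Alph P (g j)}.Infinite

/-- `f` is `P`-winning for `φ`. -/
def winningStrategy (Alph : Alphabet) (P : ProcTriple) (φ : FO) (f : Strategy) : Prop :=
  properStrategy Alph P f ∧
  ∀ w : Exec, w.valid Alph P → compatible Alph P f w → fair Alph P f w → SatS P w φ

/-- Triples of naturals, indexed by the process types (s, e, se). -/
abbrev Tok := ℕ × ℕ × ℕ

/-- `Win(φ)`: the set of triples `(k_s, k_e, k_se)` admitting a winning System strategy. -/
def WinFO (Alph : Alphabet) (φ : FO) : Set Tok :=
  { k | ∃ P : ProcTriple,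
      P.Ps.card = k.1 ∧ P.Pe.card = k.2.1 ∧ P.Pse.card = k.2.2 ∧
      ∃ f : Strategy, winningStrategy Alph P φ f }

/-! ### Parameterized vector games -/

/-- Locations: `L = {0,…,B}^A`. -/
abbrev Loc (n B : ℕ) := Fin n → Fin (B + 1)

/-- A local acceptance condition: for each process type a pair `(⋈, n)`,
where the Boolean `true` stands for `=` and `false` for `≥`. -/
abbrev LCond := (Bool × ℕ) × (Bool × ℕ) × (Bool × ℕ)

/-- Configurations: `C : L → ℕ^T`. -/
abbrev GConfig (n B : ℕ) := Loc n B → Tok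

/-- Transitions: maps `L × L → ℕ^T`. -/
abbrev GTrans (n B : ℕ) := Loc n B → Loc n B → Tok

/-- A parameterized vector game `G = (A, B, F)`. -/
structure PVG where
  Alph : Alphabet
  B : ℕ
  F : List (Loc Alph.n B → LCond)

def cmpHolds (c : Bool × ℕ) (m : ℕ) : Prop := if c.1 then m = c.2 else c.2 ≤ m

def lcondHolds (κ : LCond) (t : Tok) : Prop :=
  cmpHolds κ.1 t.1 ∧ cmpHolds κ.2.1 t.2.1 ∧ cmpHolds κ.2.2 t.2.2

/-- `C ⊨ F`. -/
def accept (G : PVG) (C : GConfig G.Alph.n G.B) : Prop :=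
  ∃ κ ∈ G.F, ∀ ℓ, lcondHolds (κ ℓ) (C ℓ)

/-- `ℓ + a`: increase coordinate `a` by one, capped at `B`. -/
def locAdd {n B : ℕ} (ℓ : Loc n B) (a : ℕ) : Loc n B :=
  fun i =>
    if (i : ℕ) = a then ⟨min ((ℓ i : ℕ) + 1) B, Nat.lt_succ_of_le (min_le_right _ _)⟩
    else ℓ i

/-- `ℓ + w` for a finite word `w` over the alphabet. -/
def locAddW {n B : ℕ} (ℓ : Loc n B) : List ℕ → Loc n B
  | [] => ℓ
  | a :: u => locAddW (locAdd ℓ a) u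

def isSysWord (Alph : Alphabet) (u : List ℕ) : Prop :=
  ∀ a ∈ u, a < Alph.n ∧ Alph.sys a = true

def isEnvWord (Alph : Alphabet) (u : List ℕ) : Prop :=
  ∀ a ∈ u, a < Alph.n ∧ Alph.sys a = false

/-- System transitions: values in `ℕ × {0} × ℕ` and moves along system words. -/
def isSysTrans (G : PVG) (τ : GTrans G.Alph.n G.B) : Prop :=
  ∀ ℓ ℓ', (τ ℓ ℓ').2.1 = 0 ∧
    (τ ℓ ℓ' ≠ ((0, 0, 0) : Tok) → ∃ u : List ℕ, isSysWord G.Alph u ∧ ℓ' = locAddW ℓ u)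

/-- Environment transitions: values in `{0} × ℕ × ℕ` and moves along environment words. -/
def isEnvTrans (G : PVG) (τ : GTrans G.Alph.n G.B) : Prop :=
  ∀ ℓ ℓ', (τ ℓ ℓ').1 = 0 ∧
    (τ ℓ ℓ' ≠ ((0, 0, 0) : Tok) → ∃ u : List ℕ, isEnvWord G.Alph u ∧ ℓ' = locAddW ℓ u)

def outm {n B : ℕ} (τ : GTrans n B) (ℓ : Loc n B) : Tok := ∑ ℓ' : Loc n B, τ ℓ ℓ'

def inm {n B : ℕ} (τ : GTrans n B) (ℓ : Loc n B) : Tok := ∑ ℓ' : Loc n B, τ ℓ' ℓ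

/-- Componentwise order on `ℕ^T`. -/
def tokLe (s t : Tok) : Prop := s.1 ≤ t.1 ∧ s.2.1 ≤ t.2.1 ∧ s.2.2 ≤ t.2.2

def applicable {n B : ℕ} (τ : GTrans n B) (C : GConfig n B) : Prop :=
  ∀ ℓ, tokLe (outm τ ℓ) (C ℓ)

/-- `τ(C)(ℓ) = C(ℓ) − out_τ(ℓ) + in_τ(ℓ)` (componentwise). -/
def applyT {n B : ℕ} (τ : GTrans n B) (C : GConfig n B) : GConfig n B :=
  fun ℓ => C ℓ - outm τ ℓ + inm τ ℓ

/-- The configuration reached from `C0` after applying the transitions `ts` in order. -/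
def confAt {n B : ℕ} (C0 : GConfig n B) (ts : List (GTrans n B)) : GConfig n B :=
  ts.foldl (fun C τ => applyT τ C) C0

/-- A valid `C0`-play, represented by its list of transitions
(step `i`, 0-based, is System's if `i` is even, Environment's if `i` is odd). -/
def validPlay (G : PVG) (C0 : GConfig G.Alph.n G.B)
    (ts : List (GTrans G.Alph.n G.B)) : Prop :=
  ∀ i (h : i < ts.length),
    applicable (ts.get ⟨i, h⟩) (confAt C0 (ts.take i)) ∧
    (i % 2 = 0 → isSysTrans G (ts.get ⟨i, h⟩) ∧ accept G (confAt C0 (ts.take (i + 1)))) ∧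
    (i % 2 = 1 → isEnvTrans G (ts.get ⟨i, h⟩) ∧ ¬ accept G (confAt C0 (ts.take (i + 1))))

/-- A strategy for System in the game: a partial map from plays to transitions. -/
abbrev GStrat (n B : ℕ) := List (GTrans n B) → Option (GTrans n B)

/-- `f(C)` is defined, and whenever `f(π) = τ` for a valid play π ending in `C_i`,
`τ` is a system transition, applicable at `C_i`, and `τ(C_i) ⊨ F`. -/
def properGStrat (G : PVG) (C0 : GConfig G.Alph.n G.B) (f : GStrat G.Alph.n G.B) : Prop :=
  (f []).isSome ∧
  ∀ ts τ, validPlay G C0 ts → f ts = some τ →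
    isSysTrans G τ ∧ applicable τ (confAt C0 ts) ∧ accept G (applyT τ (confAt C0 ts))

def gCompatible {n B : ℕ} (f : GStrat n B) (ts : List (GTrans n B)) : Prop :=
  ∀ i (h : i < ts.length), i % 2 = 0 → f (ts.take i) = some (ts.get ⟨i, h⟩)

def gMaximal (G : PVG) (C0 : GConfig G.Alph.n G.B) (f : GStrat G.Alph.n G.B)
    (ts : List (GTrans G.Alph.n G.B)) : Prop :=
  ¬ ∃ ts', ts <+: ts' ∧ ts ≠ ts' ∧ validPlay G C0 ts' ∧ gCompatible f ts'

def winningGStrat (G : PVG) (C0 : GConfig G.Alph.n G.B) (f : GStrat G.Alph.n G.B) : Prop :=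
  properGStrat G C0 f ∧
  ∀ ts, validPlay G C0 ts → gCompatible f ts → gMaximal G C0 f ts →
    accept G (confAt C0 ts)

/-- A configuration is winning for System if System has a winning strategy from it. -/
def winningConf (G : PVG) (C0 : GConfig G.Alph.n G.B) : Prop :=
  ∃ f, winningGStrat G C0 f

/-- The all-zero location `ℓ_0`. -/
def loc0 (n B : ℕ) : Loc n B := fun _ => 0

/-- `C_k⃗`: all `k⃗` tokens on `ℓ_0`. -/
def initConfig {n B : ℕ} (k : Tok) : GConfig n B :=
  Function.update (fun _ => ((0, 0, 0) : Tok)) (loc0 n B) k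

/-- `Win(G)`. -/
def WinG (G : PVG) : Set Tok :=
  { k | winningConf G (initConfig k) }

/-! ### Environment chains and constants of a game -/

/-- `C <_e C'`. -/
def envStep (G : PVG) (C C' : GConfig G.Alph.n G.B) : Prop :=
  C ≠ C' ∧ ∃ τ, isEnvTrans G τ ∧ applicable τ C ∧ C' = applyT τ C

/-- There is a chain `C = C_0 <_e C_1 <_e … <_e C_d`. -/
def hasChain (G : PVG) (C : GConfig G.Alph.n G.B) (d : ℕ) : Prop :=
  ∃ cs : ℕ → GConfig G.Alph.n G.B, cs 0 = C ∧ ∀ i < d, envStep G (cs i) (cs (i + 1))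

/-- `C ∈ Conf_d`: the longest `<_e`-chain starting in `C` has length exactly `d`. -/
def ConfD (G : PVG) (C : GConfig G.Alph.n G.B) (d : ℕ) : Prop :=
  hasChain G C d ∧ ¬ hasChain G C (d + 1)

def lcondMax (κ : LCond) : ℕ := max κ.1.2 (max κ.2.1.2 κ.2.2.2)

/-- `K`: the largest constant occurring in the acceptance condition `F`. -/
def maxConst (G : PVG) : ℕ :=
  (G.F.map fun κ => Finset.univ.sup fun ℓ : Loc G.Alph.n G.B => lcondMax (κ ℓ)).foldr max 0

/-- `|A_e|`: the number of environment letters. -/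
def envCard (Alph : Alphabet) : ℕ :=
  ((Finset.range Alph.n).filter fun a => Alph.sys a = false).card

/-- `|L| = (B+1)^|A|`. -/
def numLoc (G : PVG) : ℕ := (G.B + 1) ^ G.Alph.n

/-! ### Cutoffs -/

/-- `k⃗_0` is a cutoff of `W` with respect to `(N_s, N_e, N_se)`. -/
def IsCutoff (Ns Ne Nse : Set ℕ) (W : Set Tok) (k0 : Tok) : Prop :=
  k0.1 ∈ Ns ∧ k0.2.1 ∈ Ne ∧ k0.2.2 ∈ Nse ∧
  ((∀ k : Tok, k.1 ∈ Ns → k.2.1 ∈ Ne → k.2.2 ∈ Nse →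
      k0.1 ≤ k.1 → k0.2.1 ≤ k.2.1 → k0.2.2 ≤ k.2.2 → k ∈ W) ∨
   (∀ k : Tok, k.1 ∈ Ns → k.2.1 ∈ Ne → k.2.2 ∈ Nse →
      k0.1 ≤ k.1 → k0.2.1 ≤ k.2.1 → k0.2.2 ≤ k.2.2 → k ∉ W))

/-! ### Counting formulas and the normal form for FO[∼] -/

def FO.and (φ ψ : FO) : FO := FO.not (FO.or (FO.not φ) (FO.not ψ))

def FO.imp (φ ψ : FO) : FO := FO.or (FO.not φ) ψ

def FO.iff (φ ψ : FO) : FO := FO.and (φ.imp ψ) (ψ.imp φ)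

def FO.all (x : ℕ) (φ : FO) : FO := FO.not (FO.ex x (FO.not φ))

def trueFO : FO := FO.eq 0 0

def bigAnd (l : List FO) : FO := l.foldr FO.and trueFO

def bigOr (l : List FO) : FO := l.foldr FO.or (FO.not trueFO)

/-- `∃^{≥m} y. (mk y)`: there are at least `m` distinct witnesses; the witness
variables are `base, base+1, …, base+m-1`. -/
def exGe (m base : ℕ) (mk : ℕ → FO) : FO :=
  let distinct : List FO :=
    (List.range m).flatMap fun i =>
      ((List.range m).filter fun j => decide (i < j)).map fun j =>
        FO.not (FO.eq (base + i) (base + j))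
  let body : FO :=
    FO.and (bigAnd distinct) (bigAnd ((List.range m).map fun i => mk (base + i)))
  ((List.range m).map (base + ·)).foldr FO.ex body

/-- `∃^{=m} y. (mk y) := ∃^{≥m} y. (mk y) ∧ ¬ ∃^{≥m+1} y. (mk y)`. -/
def exEq (m base : ℕ) (mk : ℕ → FO) : FO :=
  FO.and (exGe m base mk) (FO.not (exGe (m + 1) base mk))

/-- `ψ_{B,ℓ}(y)`: in the class of `y`, each letter `a` occurs exactly `ℓ(a)` times
if `ℓ(a) < B`, and at least `ℓ(a)` times if `ℓ(a) = B`. -/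
def psiCount (n B : ℕ) (ℓ : ℕ → ℕ) (y : ℕ) : FO :=
  bigAnd ((List.range n).map fun a =>
    if ℓ a < B then
      exEq (ℓ a) (y + 1) (fun z => FO.and (FO.sim y z) (FO.letter a z))
    else
      exGe (ℓ a) (y + 1) (fun z => FO.and (FO.sim y z) (FO.letter a z)))

/-- `∃^{⋈m} y. (θ(y) ∧ ψ_{B,ℓ}(y))`, where `⋈` is `=` if `isEq` and `≥` otherwise. -/
def nfAtom (n B : ℕ) (isEq : Bool) (m : ℕ) (θ : PType) (ℓ : ℕ → ℕ) : FO :=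
  let mk : ℕ → FO := fun y => FO.and (FO.ptype θ y) (psiCount n B ℓ y)
  if isEq then exEq m 0 mk else exGe m 0 mk

/-! ### The normalized synthesis problem -/

/-- A normalized strategy: maps finite executions to finite system words. -/
abbrev NormStrategy := List Event → Option (List Event)

/-- A normalized `P`-execution, given by its block decomposition `bs`
(`bs[j]` with `j` even is a System block, `j` odd an Environment block;
this corresponds to the 1-based indexing `w = w_1 … w_n` of the paper). -/
def NormExec (Alph : Alphabet) (P : ProcTriple) (φ : FO) (bs : List (List Event)) : Prop :=
  1 ≤ bs.length ∧
  ∀ j (h : j < bs.length),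
    (j % 2 = 0 → (∀ σ ∈ bs.get ⟨j, h⟩, isSysEvent Alph P σ) ∧
        SatS P (Exec.fin ((bs.take (j + 1)).flatten)) φ) ∧
    (j % 2 = 1 → (∀ σ ∈ bs.get ⟨j, h⟩, isEnvEvent Alph P σ) ∧
        ¬ SatS P (Exec.fin ((bs.take (j + 1)).flatten)) φ)

/-- Properness of a normalized strategy: `f(ε)` is defined, outputs are system
words, and `(P, w · f(w)) ⊨ φ` whenever `f(w)` is defined. -/
def properNStrat (Alph : Alphabet) (P : ProcTriple) (φ : FO) (f : NormStrategy) : Prop :=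
  (f []).isSome ∧
  ∀ w u, f w = some u →
    (∀ σ ∈ u, isSysEvent Alph P σ) ∧ SatS P (Exec.fin (w ++ u)) φ

def nCompatible (f : NormStrategy) (bs : List (List Event)) : Prop :=
  ∀ j (h : j < bs.length), j % 2 = 0 → f ((bs.take j).flatten) = some (bs.get ⟨j, h⟩)

def nMaximal (Alph : Alphabet) (P : ProcTriple) (φ : FO) (f : NormStrategy)
    (bs : List (List Event)) : Prop :=
  ¬ ∃ bs', bs <+: bs' ∧ bs ≠ bs' ∧ NormExec Alph P φ bs' ∧ nCompatible f bs'

def winningNStrategy (Alph : Alphabet) (P : ProcTriple) (φ : FO) (f : NormStrategy) : Prop :=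
  properNStrat Alph P φ f ∧
  ∀ bs, NormExec Alph P φ bs → nCompatible f bs → nMaximal Alph P φ f bs →
    SatS P (Exec.fin bs.flatten) φ

/-- `NWin(φ)`. -/
def NWin (Alph : Alphabet) (φ : FO) : Set Tok :=
  { k | ∃ P : ProcTriple,
      P.Ps.card = k.1 ∧ P.Pe.card = k.2.1 ∧ P.Pse.card = k.2.2 ∧
      ∃ f : NormStrategy, winningNStrategy Alph P φ f }

/-! ### Concrete alphabet and formulas of the examples -/

/-- The alphabet with `A_s = {a, b} = {0, 1}` and `A_e = {c, d} = {2, 3}`. -/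
def alph4 : Alphabet := ⟨4, fun a => decide (a < 2)⟩

/-- `φ_1 = ∀x.((s(x) ∨ se(x)) → ∃y.(x∼y ∧ (a(y) ∨ b(y))))`. -/
def phi1 : FO :=
  FO.all 0 (FO.imp (FO.or (FO.ptype .s 0) (FO.ptype .se 0))
    (FO.ex 1 (FO.and (FO.sim 0 1) (FO.or (FO.letter 0 1) (FO.letter 1 1)))))

/-- `φ_4 = ∀x.((∃^{=2}y.(x∼y ∧ a(y))) ↔ (∃^{=2}y.(x∼y ∧ d(y))))`. -/
def phi4 : FO :=
  FO.all 0 (FO.iff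
    (exEq 2 1 fun y => FO.and (FO.sim 0 y) (FO.letter 0 y))
    (exEq 2 1 fun y => FO.and (FO.sim 0 y) (FO.letter 3 y)))

/-- Vectors `{0,…,3}^{4}` as functions `ℕ → ℕ`. -/
def vec4 (v0 v1 v2 v3 : ℕ) : ℕ → ℕ := fun i => [v0, v1, v2, v3].getD i 0

def allVecs4 : List (ℕ → ℕ) :=
  (List.range 4).flatMap fun v0 =>
    (List.range 4).flatMap fun v1 =>
      (List.range 4).flatMap fun v2 =>
        (List.range 4).map fun v3 => vec4 v0 v1 v2 v3

/-- `Z`: vectors with `ℓ(a) = 2 ≠ ℓ(d)` or `ℓ(d) = 2 ≠ ℓ(a)` (letters `a = 0`, `d = 3`). -/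
def Zvecs : List (ℕ → ℕ) :=
  allVecs4.filter fun ℓ => decide ((ℓ 0 = 2 ∧ ℓ 3 ≠ 2) ∨ (ℓ 3 = 2 ∧ ℓ 0 ≠ 2))

/-- `φ_4' = ⋀_{θ ∈ T, ℓ ∈ Z} ∃^{=0} y.(θ(y) ∧ ψ_{3,ℓ}(y))`. -/
def phi4' : FO :=
  bigAnd (([PType.s, PType.e, PType.se].flatMap fun θ =>
    Zvecs.map fun ℓ => nfAtom 4 3 true 0 θ ℓ))

/-! ### Effective encodings of inputs (for decidability statements) -/

def decodePType (k : ℕ) : PType :=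
  if k % 3 = 0 then .s else if k % 3 = 1 then .e else .se

/-- Surjective decoding of formulas from naturals (with fuel). -/
def decodeFOAux : ℕ → ℕ → FO
  | 0, _ => FO.eq 0 0
  | fuel + 1, c =>
    let t := c % 9
    let m := c / 9
    let a := m.unpair.1
    let b := m.unpair.2
    if t = 0 then FO.ptype (decodePType a) b
    else if t = 1 then FO.letter a b
    else if t = 2 then FO.eq a b
    else if t = 3 then FO.sim a b
    else if t = 4 then FO.lt a b
    else if t = 5 then FO.succ a b
    else if t = 6 then FO.not (decodeFOAux fuel m)
    else if t = 7 then FO.or (decodeFOAux fuel a) (decodeFOAux fuel b)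
    else FO.ex a (decodeFOAux fuel b)

def decodeFO (c : ℕ) : FO := decodeFOAux c c

/-- Decoding an input of the synthesis/satisfiability problems: an alphabet
(size and partition) together with a formula. -/
def decodeFOInput (c : ℕ) : Alphabet × FO :=
  (⟨c.unpair.1.unpair.1, fun a => (c.unpair.1.unpair.2).testBit a⟩, decodeFO c.unpair.2)

def decodeBN (m : ℕ) : Bool × ℕ := (decide (m % 2 = 0), m / 2)

def decodeLCond (m : ℕ) : LCond :=
  (decodeBN m.unpair.1, decodeBN m.unpair.2.unpair.1, decodeBN m.unpair.2.unpair.2)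

/-- An explicit index of a location, used to decode local acceptance conditions. -/
def locIndex {n B : ℕ} (ℓ : Loc n B) : ℕ := ∑ i : Fin n, (ℓ i : ℕ) * (B + 1) ^ (i : ℕ)

/-- Decoding a parameterized vector game from a natural number. -/
def decodeGame (c : ℕ) : PVG :=
  let n := c.unpair.1.unpair.1
  let sy := c.unpair.1.unpair.2
  let B := c.unpair.2.unpair.1
  let Fc := c.unpair.2.unpair.2
  { Alph := ⟨n, fun a => sy.testBit a⟩
    B := B
    F := (Denumerable.ofNat (List ℕ) Fc).map fun kc =>
      fun ℓ => decodeLCond ((Denumerable.ofNat (List ℕ) kc).getD (locIndex ℓ) 0) }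


/-! The game has one System letter `a = 0` and one Environment letter `c = 1`; it accepts iff
either no Environment token is on `lc = l0 + c` and no System token is on `la = l0 + a`, or both
locations are occupied. Tokens only move upwards, so fresh tokens on `la` and `lc` come from `l0`.
Whenever Environment pushes a token from `l0` to `lc`, System must answer with a token from `l0`
to `la`; when Environment moves on to `lcc`, System has to retire its tokens on `la` to `laa`, where
they are useless. Each Environment token thus costs System one token, and answering one-for-one is all
System needs: `(k_s, k_e, 0)` is winning iff `k_e ≤ k_s`, which no cutoff can describe. -/

section Transitions

variable {n B : ℕ}

lemma le_locAdd (ℓ : Loc n B) (a : ℕ) : ℓ ≤ locAdd ℓ a := by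
  intro i
  unfold locAdd
  split_ifs
  · change (ℓ i : ℕ) ≤ min ((ℓ i : ℕ) + 1) B
    have := (ℓ i).is_lt
    omega
  · exact le_rfl

lemma le_locAddW (ℓ : Loc n B) (u : List ℕ) : ℓ ≤ locAddW ℓ u := by
  induction u generalizing ℓ with
  | nil => exact le_rfl
  | cons a u ih => exact (le_locAdd ℓ a).trans (ih _)

lemma isSysTrans.le {G : PVG} {τ : GTrans G.Alph.n G.B} (hτ : isSysTrans G τ)
    {ℓ ℓ' : Loc G.Alph.n G.B} (h : τ ℓ ℓ' ≠ 0) : ℓ ≤ ℓ' := by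
  obtain ⟨u, -, rfl⟩ := (hτ ℓ ℓ').2 h
  exact le_locAddW ℓ u

lemma isEnvTrans.le {G : PVG} {τ : GTrans G.Alph.n G.B} (hτ : isEnvTrans G τ)
    {ℓ ℓ' : Loc G.Alph.n G.B} (h : τ ℓ ℓ' ≠ 0) : ℓ ≤ ℓ' := by
  obtain ⟨u, -, rfl⟩ := (hτ ℓ ℓ').2 h
  exact le_locAddW ℓ u

lemma sum_applyT_le {τ : GTrans n B} {C : GConfig n B} (happ : applicable τ C)
    {S : Finset (Loc n B)} (hS : ∀ ℓ ℓ', τ ℓ ℓ' ≠ 0 → ℓ' ∈ S → ℓ ∈ S) :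
    ∑ ℓ ∈ S, applyT τ C ℓ ≤ ∑ ℓ ∈ S, C ℓ := by
  have hin : ∑ ℓ ∈ S, inm τ ℓ ≤ ∑ ℓ ∈ S, outm τ ℓ :=
    calc ∑ ℓ' ∈ S, inm τ ℓ' = ∑ ℓ' ∈ S, ∑ ℓ ∈ S, τ ℓ ℓ' := by
          refine Finset.sum_congr rfl fun ℓ' hℓ' => ?_
          refine (Finset.sum_subset (Finset.subset_univ S) fun ℓ _ hℓ => ?_).symm
          by_contra h
          exact hℓ (hS ℓ ℓ' h hℓ')
      _ = ∑ ℓ ∈ S, ∑ ℓ' ∈ S, τ ℓ ℓ' := Finset.sum_comm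
      _ ≤ ∑ ℓ ∈ S, outm τ ℓ :=
          Finset.sum_le_sum fun ℓ _ => Finset.sum_le_sum_of_subset (Finset.subset_univ S)
  have hbal : ∑ ℓ ∈ S, applyT τ C ℓ + ∑ ℓ ∈ S, outm τ ℓ =
      ∑ ℓ ∈ S, C ℓ + ∑ ℓ ∈ S, inm τ ℓ := by
    rw [← Finset.sum_add_distrib, ← Finset.sum_add_distrib]
    refine Finset.sum_congr rfl fun ℓ _ => ?_
    rw [applyT, add_right_comm, tsub_add_cancel_of_le (happ ℓ)]
  refine le_of_add_le_add_right (a := ∑ ℓ ∈ S, outm τ ℓ) ?_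
  calc _ = ∑ ℓ ∈ S, C ℓ + ∑ ℓ ∈ S, inm τ ℓ := hbal
    _ ≤ _ := by gcongr

lemma sum_applyT_le_of_isLowerSet {G : PVG} {τ : GTrans G.Alph.n G.B}
    (hτ : isSysTrans G τ ∨ isEnvTrans G τ) {C : GConfig G.Alph.n G.B} (happ : applicable τ C)
    {S : Finset (Loc G.Alph.n G.B)} (hS : IsLowerSet (S : Set (Loc G.Alph.n G.B))) :
    ∑ ℓ ∈ S, applyT τ C ℓ ≤ ∑ ℓ ∈ S, C ℓ :=
  sum_applyT_le happ fun _ _ h hℓ' => hS (hτ.elim (·.le h) (·.le h)) hℓ'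

lemma isSysTrans.applyT_snd_fst {G : PVG} {τ : GTrans G.Alph.n G.B} (hτ : isSysTrans G τ)
    (C : GConfig G.Alph.n G.B) (ℓ : Loc G.Alph.n G.B) :
    (applyT τ C ℓ).2.1 = (C ℓ).2.1 := by
  have hout : (outm τ ℓ).2.1 = 0 := by
    simp only [outm, Prod.snd_sum, Prod.fst_sum, (hτ _ _).1, Finset.sum_const_zero]
  have hin : (inm τ ℓ).2.1 = 0 := by
    simp only [inm, Prod.snd_sum, Prod.fst_sum, (hτ _ _).1, Finset.sum_const_zero]
  change (C ℓ).2.1 - (outm τ ℓ).2.1 + (inm τ ℓ).2.1 = _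
  rw [hout, hin]
  rfl

lemma isEnvTrans.applyT_fst {G : PVG} {τ : GTrans G.Alph.n G.B} (hτ : isEnvTrans G τ)
    (C : GConfig G.Alph.n G.B) (ℓ : Loc G.Alph.n G.B) :
    (applyT τ C ℓ).1 = (C ℓ).1 := by
  have hout : (outm τ ℓ).1 = 0 := by
    simp only [outm, Prod.fst_sum, (hτ _ _).1, Finset.sum_const_zero]
  have hin : (inm τ ℓ).1 = 0 := by
    simp only [inm, Prod.fst_sum, (hτ _ _).1, Finset.sum_const_zero]
  change (C ℓ).1 - (outm τ ℓ).1 + (inm τ ℓ).1 = _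
  rw [hout, hin]
  rfl

def move (p q : Loc n B) (t : Tok) : GTrans n B := fun x y => if x = p ∧ y = q then t else 0

lemma outm_move (p q : Loc n B) (t : Tok) (ℓ : Loc n B) :
    outm (move p q t) ℓ = if ℓ = p then t else 0 := by
  by_cases h : ℓ = p <;> simp [outm, move, h]

lemma inm_move (p q : Loc n B) (t : Tok) (ℓ : Loc n B) :
    inm (move p q t) ℓ = if ℓ = q then t else 0 := by
  by_cases h : ℓ = q <;> simp [inm, move, h]

lemma applyT_move {p q : Loc n B} (hpq : p ≠ q) (t : Tok) (C : GConfig n B) (ℓ : Loc n B) :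
    applyT (move p q t) C ℓ =
      if ℓ = p then C ℓ - t else if ℓ = q then C ℓ + t else C ℓ := by
  by_cases hp : ℓ = p
  · subst hp; simp [applyT, outm_move, inm_move, hpq]
  · by_cases hq : ℓ = q
    · subst hq; simp [applyT, outm_move, inm_move, hp]
    · simp [applyT, outm_move, inm_move, hp, hq]

lemma applicable_move {p q : Loc n B} {t : Tok} {C : GConfig n B} (h : t ≤ C p) :
    applicable (move p q t) C := by
  intro ℓ
  rw [outm_move]
  split_ifs with hp
  · exact hp ▸ h
  · exact (zero_le : (0 : Tok) ≤ C ℓ)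

lemma isSysTrans_move {G : PVG} {p q : Loc G.Alph.n G.B} {u : List ℕ} (hu : isSysWord G.Alph u)
    (hq : q = locAddW p u) {t : Tok} (ht : t.2.1 = 0) : isSysTrans G (move p q t) := by
  intro ℓ ℓ'
  unfold move
  split_ifs with h
  · exact ⟨ht, fun _ => ⟨u, hu, h.2 ▸ h.1 ▸ hq⟩⟩
  · exact ⟨rfl, fun h0 => absurd rfl h0⟩

lemma isEnvTrans_move {G : PVG} {p q : Loc G.Alph.n G.B} {u : List ℕ} (hu : isEnvWord G.Alph u)
    (hq : q = locAddW p u) {t : Tok} (ht : t.1 = 0) : isEnvTrans G (move p q t) := by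
  intro ℓ ℓ'
  unfold move
  split_ifs with h
  · exact ⟨ht, fun _ => ⟨u, hu, h.2 ▸ h.1 ▸ hq⟩⟩
  · exact ⟨rfl, fun h0 => absurd rfl h0⟩

end Transitions

section Plays

variable {G : PVG} {C0 : GConfig G.Alph.n G.B} {f : GStrat G.Alph.n G.B}
  {ts : List (GTrans G.Alph.n G.B)} {τ : GTrans G.Alph.n G.B}

lemma confAt_append_singleton {n B : ℕ} (C0 : GConfig n B) (ts : List (GTrans n B))
    (τ : GTrans n B) : confAt C0 (ts ++ [τ]) = applyT τ (confAt C0 ts) := by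
  simp [confAt]

lemma validPlay_append_singleton_iff :
    validPlay G C0 (ts ++ [τ]) ↔ validPlay G C0 ts ∧ applicable τ (confAt C0 ts) ∧
      (ts.length % 2 = 0 → isSysTrans G τ ∧ accept G (applyT τ (confAt C0 ts))) ∧
      (ts.length % 2 = 1 → isEnvTrans G τ ∧ ¬ accept G (applyT τ (confAt C0 ts))) := by
  have hfull : (ts ++ [τ]).take (ts.length + 1) = ts ++ [τ] := List.take_of_length_le (by simp)
  constructor
  · intro h
    refine ⟨fun i hi => ?_, ?_⟩
    · have := h i (by simp; omega)
      simpa [List.getElem_append_left hi, List.take_append_of_le_length (Nat.le_of_lt hi),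
        List.take_append_of_le_length (Nat.succ_le_of_lt hi)] using this
    · simpa [hfull, confAt_append_singleton] using h ts.length (by simp)
  · rintro ⟨h, hlast⟩ i hi
    rcases (Nat.lt_succ_iff_lt_or_eq.1 (by simpa using hi)) with hi | rfl
    · simpa [List.getElem_append_left hi, List.take_append_of_le_length (Nat.le_of_lt hi),
        List.take_append_of_le_length (Nat.succ_le_of_lt hi)] using h i hi
    · simpa [hfull, confAt_append_singleton] using hlast

lemma gCompatible_append_singleton_iff :
    gCompatible f (ts ++ [τ]) ↔ gCompatible f ts ∧ (ts.length % 2 = 0 → f ts = some τ) := by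
  constructor
  · intro h
    refine ⟨fun i hi hev => ?_, fun hev => by simpa using h ts.length (by simp) hev⟩
    simpa [List.getElem_append_left hi, List.take_append_of_le_length (Nat.le_of_lt hi)]
      using h i (by simp; omega) hev
  · rintro ⟨h, hlast⟩ i hi hev
    rcases (Nat.lt_succ_iff_lt_or_eq.1 (by simpa using hi)) with hi | rfl
    · simpa [List.getElem_append_left hi, List.take_append_of_le_length (Nat.le_of_lt hi)]
        using h i hi hev
    · simpa using hlast hev

lemma accept_confAt_of_odd (hv : validPlay G C0 ts) (hodd : ts.length % 2 = 1) :
    accept G (confAt C0 ts) := by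
  obtain rfl | ⟨ts, τ, rfl⟩ := ts.eq_nil_or_concat'
  · simp at hodd
  · have hev : ts.length % 2 = 0 := by simp at hodd; omega
    rw [confAt_append_singleton]
    exact ((validPlay_append_singleton_iff.1 hv).2.2.1 hev).2

lemma gMaximal_of_eq_none (hev : ts.length % 2 = 0) (hf : f ts = none) : gMaximal G C0 f ts := by
  rintro ⟨ts', hpre, hne, -, hc⟩
  have hlt : ts.length < ts'.length :=
    lt_of_le_of_ne hpre.length_le fun h => hne (hpre.eq_of_length h)
  have := hc ts.length hlt hev
  rw [List.get_eq_getElem, ← List.prefix_iff_eq_take.1 hpre, hf] at this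
  cases this

lemma validPlay_append_strategy (hf : properGStrat G C0 f) (hv : validPlay G C0 ts)
    (hc : gCompatible f ts) (hev : ts.length % 2 = 0) (hτ : f ts = some τ) :
    validPlay G C0 (ts ++ [τ]) ∧ gCompatible f (ts ++ [τ]) := by
  obtain ⟨hsys, happ, hacc⟩ := hf.2 ts τ hv hτ
  exact ⟨validPlay_append_singleton_iff.2 ⟨hv, happ, fun _ => ⟨hsys, hacc⟩, by omega⟩,
    gCompatible_append_singleton_iff.2 ⟨hc, fun _ => hτ⟩⟩

theorem winningConf_of_invariants (g : GConfig G.Alph.n G.B → Option (GTrans G.Alph.n G.B))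
    (I J : GConfig G.Alph.n G.B → Prop)
    (hg : ∀ C τ, g C = some τ → isSysTrans G τ ∧ applicable τ C ∧ accept G (applyT τ C))
    (hI0 : I C0) (hIJ : ∀ C, I C → ∃ τ, g C = some τ ∧ J (applyT τ C))
    (hJI : ∀ D σ, J D → accept G D → isEnvTrans G σ → applicable σ D →
      ¬ accept G (applyT σ D) → I (applyT σ D)) :
    winningConf G C0 := by
  let f : GStrat G.Alph.n G.B := fun ts => g (confAt C0 ts)
  have hprop : properGStrat G C0 f := by
    refine ⟨?_, fun ts τ _ hτ => hg _ τ hτ⟩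
    obtain ⟨τ, hτ, -⟩ := hIJ C0 hI0
    simp [f, confAt, hτ]
  have hinv : ∀ ts, validPlay G C0 ts → gCompatible f ts →
      (ts.length % 2 = 0 → I (confAt C0 ts)) ∧ (ts.length % 2 = 1 → J (confAt C0 ts)) := by
    intro ts
    induction ts using List.reverseRecOn with
    | nil => exact fun _ _ => ⟨fun _ => hI0, fun h => absurd h (by simp)⟩
    | append_singleton ts τ ih =>
      intro hv hc
      obtain ⟨hv, happ, -, henv⟩ := validPlay_append_singleton_iff.1 hv
      obtain ⟨hc, hτ⟩ := gCompatible_append_singleton_iff.1 hc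
      obtain ⟨ihI, ihJ⟩ := ih hv hc
      simp only [List.length_append, List.length_singleton, confAt_append_singleton]
      rcases Nat.mod_two_eq_zero_or_one ts.length with h | h
      · obtain ⟨τ', hτ', hJ⟩ := hIJ _ (ihI h)
        obtain rfl : τ' = τ := Option.some_injective _ (hτ'.symm.trans (hτ h))
        exact ⟨fun _ => by omega, fun _ => hJ⟩
      · exact ⟨fun _ => hJI _ _ (ihJ h) (accept_confAt_of_odd hv h) (henv h).1 happ (henv h).2,
          fun _ => by omega⟩
  refine ⟨f, hprop, fun ts hv hc hmax => ?_⟩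
  rcases Nat.mod_two_eq_zero_or_one ts.length with h | h
  · obtain ⟨τ, hτ, -⟩ := hIJ _ ((hinv ts hv hc).1 h)
    obtain ⟨hv', hc'⟩ := validPlay_append_strategy hprop hv hc h hτ
    exact absurd ⟨ts ++ [τ], List.prefix_append _ _, by simp, hv', hc'⟩ hmax
  · exact accept_confAt_of_odd hv h

def EnvToMove (G : PVG) (C0 : GConfig G.Alph.n G.B) (f : GStrat G.Alph.n G.B)
    (C : GConfig G.Alph.n G.B) : Prop :=
  ∃ ts, validPlay G C0 ts ∧ gCompatible f ts ∧ ts.length % 2 = 1 ∧ confAt C0 ts = C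

lemma exists_answer_of_ne_none (hf : properGStrat G C0 f) (hv : validPlay G C0 ts)
    (hc : gCompatible f ts) (hev : ts.length % 2 = 0) (hsome : f ts ≠ none) :
    ∃ τ, isSysTrans G τ ∧ applicable τ (confAt C0 ts) ∧ accept G (applyT τ (confAt C0 ts)) ∧
      EnvToMove G C0 f (applyT τ (confAt C0 ts)) := by
  obtain ⟨τ, hτ⟩ := Option.ne_none_iff_exists'.1 hsome
  obtain ⟨hv', hc'⟩ := validPlay_append_strategy hf hv hc hev hτ
  obtain ⟨hsys, happ, hacc⟩ := hf.2 ts τ hv hτ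
  exact ⟨τ, hsys, happ, hacc, ts ++ [τ], hv', hc', by simp; omega,
    confAt_append_singleton C0 ts τ⟩

lemma exists_first_answer (hf : properGStrat G C0 f) :
    ∃ τ, isSysTrans G τ ∧ applicable τ C0 ∧ accept G (applyT τ C0) ∧
      EnvToMove G C0 f (applyT τ C0) :=
  exists_answer_of_ne_none hf (by simp [validPlay]) (by simp [gCompatible]) rfl
    (Option.isSome_iff_ne_none.1 hf.1)

lemma EnvToMove.exists_answer (hf : winningGStrat G C0 f) {C : GConfig G.Alph.n G.B}
    (hC : EnvToMove G C0 f C) {σ : GTrans G.Alph.n G.B} (hσ : isEnvTrans G σ)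
    (happ : applicable σ C) (hna : ¬ accept G (applyT σ C)) :
    ∃ τ, isSysTrans G τ ∧ applicable τ (applyT σ C) ∧ accept G (applyT τ (applyT σ C)) ∧
      EnvToMove G C0 f (applyT τ (applyT σ C)) := by
  obtain ⟨ts, hv, hc, hodd, rfl⟩ := hC
  have hv' : validPlay G C0 (ts ++ [σ]) :=
    validPlay_append_singleton_iff.2 ⟨hv, happ, by omega, fun _ => ⟨hσ, hna⟩⟩
  have hc' : gCompatible f (ts ++ [σ]) := gCompatible_append_singleton_iff.2 ⟨hc, by omega⟩
  have hev : (ts ++ [σ]).length % 2 = 0 := by simp; omega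
  have hsome : f (ts ++ [σ]) ≠ none := fun hnone => by
    have := hf.2 _ hv' hc' (gMaximal_of_eq_none hev hnone)
    rw [confAt_append_singleton] at this
    exact hna this
  simpa only [confAt_append_singleton] using exists_answer_of_ne_none hf.1 hv' hc' hev hsome

end Plays

lemma not_isCutoff_of_mem_iff {W : Set Tok} (hW : ∀ ks ke : ℕ, ((ks, ke, 0) : Tok) ∈ W ↔ ke ≤ ks)
    (k0 : Tok) : ¬ IsCutoff Set.univ Set.univ {0} W k0 := by
  obtain ⟨ks, ke, kse⟩ := k0
  rintro ⟨-, -, rfl, hall | hnone⟩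
  · have := (hW ks (ks + ke + 1)).1
      (hall _ trivial trivial rfl le_rfl (by dsimp only; omega) le_rfl)
    omega
  · exact hnone (ks + ke, ke, 0) trivial trivial rfl (by dsimp only; omega) le_rfl le_rfl
      ((hW _ _).2 (by omega))

namespace CounterGame

abbrev alph : Alphabet := ⟨2, fun a => decide (a = 0)⟩

def l0 : Loc 2 2 := loc0 2 2
def la : Loc 2 2 := ![1, 0]
def laa : Loc 2 2 := ![2, 0]
def lc : Loc 2 2 := ![0, 1]
def lcc : Loc 2 2 := ![0, 2]

def sAt (C : GConfig 2 2) (ℓ : Loc 2 2) : ℕ := (C ℓ).1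
def eAt (C : GConfig 2 2) (ℓ : Loc 2 2) : ℕ := (C ℓ).2.1

def κ₁ : Loc 2 2 → LCond := fun ℓ => ((decide (ℓ = la), 0), (decide (ℓ = lc), 0), (false, 0))

def κ₂ : Loc 2 2 → LCond := fun ℓ =>
  ((false, if ℓ = la then 1 else 0), (false, if ℓ = lc then 1 else 0), (false, 0))

abbrev game : PVG := ⟨alph, 2, [κ₁, κ₂]⟩

lemma accept_iff (C : GConfig 2 2) :
    accept game C ↔ (eAt C lc = 0 ∧ sAt C la = 0) ∨ (1 ≤ eAt C lc ∧ 1 ≤ sAt C la) := by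
  have hac : la ≠ lc := by decide
  simp only [accept, List.mem_cons, List.not_mem_nil, or_false, exists_eq_or_imp, exists_eq_left,
    κ₁, κ₂, lcondHolds, cmpHolds]
  refine or_congr ⟨fun h => ?_, fun h ℓ => ?_⟩ ⟨fun h => ?_, fun h ℓ => ?_⟩
  · simpa [sAt, eAt, hac, hac.symm] using And.intro (h lc) (h la)
  · by_cases h1 : ℓ = la <;> by_cases h2 : ℓ = lc <;> simp_all [sAt, eAt]
  · simpa [sAt, eAt, hac, hac.symm] using And.intro (h lc) (h la)
  · by_cases h1 : ℓ = la <;> by_cases h2 : ℓ = lc <;> simp_all [sAt, eAt]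

lemma sAt_applyT_le {τ : GTrans 2 2} (hτ : isSysTrans game τ) {C : GConfig 2 2}
    (happ : applicable τ C) :
    sAt (applyT τ C) l0 ≤ sAt C l0 ∧
      sAt (applyT τ C) l0 + sAt (applyT τ C) la ≤ sAt C l0 + sAt C la := by
  have h0 := sum_applyT_le_of_isLowerSet (Or.inl hτ) happ (S := {l0})
    (by simp only [IsLowerSet, Finset.mem_coe, Pi.le_def]; decide)
  have h0a := sum_applyT_le_of_isLowerSet (Or.inl hτ) happ (S := {l0, la})
    (by simp only [IsLowerSet, Finset.mem_coe, Pi.le_def]; decide)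
  rw [Finset.sum_singleton, Finset.sum_singleton] at h0
  rw [Finset.sum_pair (by decide), Finset.sum_pair (by decide)] at h0a
  exact ⟨h0.1, h0a.1⟩

lemma eAt_applyT_le {σ : GTrans 2 2} (hσ : isEnvTrans game σ) {C : GConfig 2 2}
    (happ : applicable σ C) :
    eAt (applyT σ C) l0 ≤ eAt C l0 ∧
      eAt (applyT σ C) l0 + eAt (applyT σ C) lc ≤ eAt C l0 + eAt C lc := by
  have h0 := sum_applyT_le_of_isLowerSet (Or.inr hσ) happ (S := {l0})
    (by simp only [IsLowerSet, Finset.mem_coe, Pi.le_def]; decide)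
  have h0c := sum_applyT_le_of_isLowerSet (Or.inr hσ) happ (S := {l0, lc})
    (by simp only [IsLowerSet, Finset.mem_coe, Pi.le_def]; decide)
  rw [Finset.sum_singleton, Finset.sum_singleton] at h0
  rw [Finset.sum_pair (by decide), Finset.sum_pair (by decide)] at h0c
  exact ⟨h0.2.1, h0c.2.1⟩

lemma isSysTrans_move_a {p q : Loc 2 2} (hq : q = locAdd p 0) {t : Tok} (ht : t.2.1 = 0) :
    isSysTrans game (move p q t) :=
  isSysTrans_move (u := [0]) (by simp [isSysWord]) hq ht

lemma isEnvTrans_move_c {p q : Loc 2 2} (hq : q = locAdd p 1) {t : Tok} (ht : t.1 = 0) :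
    isEnvTrans game (move p q t) :=
  isEnvTrans_move (u := [1]) (by simp [isEnvWord]) hq ht

lemma sAt_applyT_move {p q : Loc 2 2} (hpq : p ≠ q) (t : Tok) (C : GConfig 2 2) (ℓ : Loc 2 2) :
    sAt (applyT (move p q t) C) ℓ =
      if ℓ = p then sAt C ℓ - t.1 else if ℓ = q then sAt C ℓ + t.1 else sAt C ℓ := by
  simp only [sAt, applyT_move hpq]
  split_ifs <;> rfl

lemma eAt_applyT_move {p q : Loc 2 2} (hpq : p ≠ q) (t : Tok) (C : GConfig 2 2) (ℓ : Loc 2 2) :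
    eAt (applyT (move p q t) C) ℓ =
      if ℓ = p then eAt C ℓ - t.2.1 else if ℓ = q then eAt C ℓ + t.2.1 else eAt C ℓ := by
  simp only [eAt, applyT_move hpq]
  split_ifs <;> rfl

def sysMove (C : GConfig 2 2) : Option (GTrans 2 2) :=
  if eAt C lc = 0 then some (move la laa (sAt C la, 0, 0))
  else if sAt C la ≠ 0 then some (move l0 la 0)
  else if sAt C l0 = 0 then none
  else some (move l0 la (1, 0, 0))

lemma sysMove_spec {C : GConfig 2 2} {τ : GTrans 2 2} (h : sysMove C = some τ) :
    isSysTrans game τ ∧ applicable τ C ∧ accept game (applyT τ C) := by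
  unfold sysMove at h
  split_ifs at h with hc ha h0 <;> cases h
  · refine ⟨isSysTrans_move_a (by decide) rfl, applicable_move ⟨le_rfl, zero_le, zero_le⟩, ?_⟩
    rw [accept_iff]
    left
    simp +decide [sAt_applyT_move, eAt_applyT_move, hc]
  · refine ⟨isSysTrans_move_a (by decide) rfl, applicable_move zero_le, ?_⟩
    rw [accept_iff]
    right
    simpa +decide [sAt_applyT_move, eAt_applyT_move, Nat.one_le_iff_ne_zero] using ⟨hc, ha⟩
  · refine ⟨isSysTrans_move_a (by decide) rfl,
      applicable_move ⟨Nat.one_le_iff_ne_zero.2 h0, zero_le, zero_le⟩, ?_⟩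
    rw [accept_iff]
    right
    simpa +decide [sAt_applyT_move, eAt_applyT_move, Nat.one_le_iff_ne_zero] using hc

def sysInv (C : GConfig 2 2) : Prop :=
  eAt C l0 ≤ sAt C l0 ∧ (eAt C lc ≠ 0 → sAt C la = 0 → eAt C l0 < sAt C l0)

lemma exists_sysMove_of_sysInv {C : GConfig 2 2} (hC : sysInv C) :
    ∃ τ, sysMove C = some τ ∧ eAt (applyT τ C) l0 ≤ sAt (applyT τ C) l0 := by
  obtain ⟨hle, hlt⟩ := hC
  unfold sysMove
  split_ifs with hc ha h0
  · refine ⟨_, rfl, ?_⟩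
    simpa +decide [sAt_applyT_move, eAt_applyT_move] using hle
  · refine ⟨_, rfl, ?_⟩
    simpa +decide [sAt_applyT_move, eAt_applyT_move] using hle
  · have := hlt hc (not_not.1 ha)
    omega
  · refine ⟨_, rfl, ?_⟩
    simpa +decide [sAt_applyT_move, eAt_applyT_move] using
      Nat.le_sub_one_of_lt (hlt hc (not_not.1 ha))

lemma sysInv_applyT {D : GConfig 2 2} (hD : eAt D l0 ≤ sAt D l0) (hacc : accept game D)
    {σ : GTrans 2 2} (hσ : isEnvTrans game σ) (happ : applicable σ D)
    (hna : ¬ accept game (applyT σ D)) : sysInv (applyT σ D) := by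
  have hs : ∀ ℓ, sAt (applyT σ D) ℓ = sAt D ℓ := hσ.applyT_fst D
  have he := eAt_applyT_le hσ happ
  rw [accept_iff] at hacc hna
  refine ⟨?_, fun hc ha => ?_⟩ <;> simp only [hs] at * <;> omega

lemma initConfig_apply (k : Tok) (ℓ : Loc 2 2) :
    (initConfig k : GConfig 2 2) ℓ = if ℓ = l0 then k else 0 :=
  Function.update_apply _ _ _ _

lemma winningConf_of_le {ks ke : ℕ} (h : ke ≤ ks) : winningConf game (initConfig (ks, ke, 0)) :=
  winningConf_of_invariants sysMove sysInv (fun D => eAt D l0 ≤ sAt D l0)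
    (fun _ _ => sysMove_spec)
    (by simp +decide [sysInv, sAt, eAt, initConfig_apply, h])
    (fun _ => exists_sysMove_of_sysInv) (fun _ _ hD hacc => sysInv_applyT hD hacc)

section Challenge

variable {C0 : GConfig 2 2} {f : GStrat 2 2}

/-- Environment moves a token into `lc`; System can answer only with a fresh token from `l0`. -/
lemma exists_answer_enter (hf : winningGStrat game C0 f) {C : GConfig 2 2}
    (hC : EnvToMove game C0 f C) (hc : eAt C lc = 0) (ha : sAt C la = 0) (h0 : 1 ≤ eAt C l0) :
    ∃ C', EnvToMove game C0 f C' ∧ eAt C' lc = 1 ∧ 1 ≤ sAt C' la ∧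
      eAt C' l0 + 1 = eAt C l0 ∧ sAt C' l0 + 1 ≤ sAt C l0 := by
  have hσ : isEnvTrans game (move l0 lc (0, 1, 0)) := isEnvTrans_move_c (by decide) rfl
  set D := applyT (move l0 lc (0, 1, 0)) C with hD
  have hDs : ∀ ℓ, sAt D ℓ = sAt C ℓ := hσ.applyT_fst C
  have hDc : eAt D lc = 1 := by simp +decide [hD, eAt_applyT_move, hc]
  have hD0 : eAt D l0 = eAt C l0 - 1 := by simp +decide [hD, eAt_applyT_move]
  have hna : ¬ accept game D := by
    rw [accept_iff, hDc, hDs, ha]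
    omega
  obtain ⟨τ, hτ, happ, hacc, hC'⟩ :=
    hC.exists_answer hf hσ (applicable_move ⟨zero_le, h0, zero_le⟩) hna
  have he : ∀ ℓ, eAt (applyT τ D) ℓ = eAt D ℓ := hτ.applyT_snd_fst D
  have hle := (sAt_applyT_le hτ happ).2
  rw [accept_iff, he, hDc] at hacc
  rw [hDs, hDs, ha] at hle
  exact ⟨_, hC', by rw [he, hDc], by omega, by rw [he, hD0]; omega, by omega⟩

/-- Environment clears `lc`; System must then clear `la`, without gaining tokens on `l0`. -/
lemma exists_answer_leave (hf : winningGStrat game C0 f) {C : GConfig 2 2}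
    (hC : EnvToMove game C0 f C) (ha : 1 ≤ sAt C la) :
    ∃ C', EnvToMove game C0 f C' ∧ eAt C' lc = 0 ∧ sAt C' la = 0 ∧
      eAt C' l0 = eAt C l0 ∧ sAt C' l0 ≤ sAt C l0 := by
  have hσ : isEnvTrans game (move lc lcc (0, eAt C lc, 0)) := isEnvTrans_move_c (by decide) rfl
  set D := applyT (move lc lcc (0, eAt C lc, 0)) C with hD
  have hDs : ∀ ℓ, sAt D ℓ = sAt C ℓ := hσ.applyT_fst C
  have hDc : eAt D lc = 0 := by simp +decide [hD, eAt_applyT_move]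
  have hD0 : eAt D l0 = eAt C l0 := by simp +decide [hD, eAt_applyT_move]
  have hna : ¬ accept game D := by
    rw [accept_iff, hDc, hDs]
    omega
  obtain ⟨τ, hτ, happ, hacc, hC'⟩ :=
    hC.exists_answer hf hσ (applicable_move ⟨zero_le, le_rfl, zero_le⟩) hna
  have he : ∀ ℓ, eAt (applyT τ D) ℓ = eAt D ℓ := hτ.applyT_snd_fst D
  have hle := (sAt_applyT_le hτ happ).1
  rw [accept_iff, he, hDc] at hacc
  rw [hDs] at hle
  exact ⟨_, hC', by rw [he, hDc], by omega, by rw [he, hD0], hle⟩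

/-- Each round costs Environment one token of `l0` and System at least one. -/
lemma le_of_winningConf {ks ke : ℕ} (h : winningConf game (initConfig (ks, ke, 0))) :
    ke ≤ ks := by
  obtain ⟨f, hf⟩ := h
  set I : GConfig 2 2 := initConfig (ks, ke, 0) with hI
  suffices ∀ i ≤ ke, ∃ C, EnvToMove game I f C ∧ eAt C lc = 0 ∧
      sAt C la = 0 ∧ eAt C l0 + i = ke ∧ sAt C l0 + i ≤ ks by
    obtain ⟨C, -, -, -, -, hC⟩ := this ke le_rfl
    omega
  intro i hi
  induction i with
  | zero =>
    obtain ⟨τ, hτ, happ, hacc, hC⟩ := exists_first_answer hf.1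
    have he : ∀ ℓ, eAt (applyT τ I) ℓ = eAt I ℓ := hτ.applyT_snd_fst I
    have hIc : eAt I lc = 0 := by simp +decide [hI, eAt, initConfig_apply]
    have hIe : eAt I l0 = ke := by simp [hI, eAt, initConfig_apply]
    have hIs : sAt I l0 = ks := by simp [hI, sAt, initConfig_apply]
    have hle := (sAt_applyT_le hτ happ).1
    rw [accept_iff, he, hIc] at hacc
    exact ⟨_, hC, by rw [he, hIc], by omega, by rw [he, hIe, add_zero], by omega⟩
  | succ i ih =>
    obtain ⟨C, hC, hc, ha, he, hs⟩ := ih (by omega)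
    obtain ⟨C₁, hC₁, hc₁, ha₁, he₁, hs₁⟩ := exists_answer_enter hf hC hc ha (by omega)
    obtain ⟨C₂, hC₂, hc₂, ha₂, he₂, hs₂⟩ := exists_answer_leave hf hC₁ ha₁
    exact ⟨C₂, hC₂, hc₂, ha₂, by omega, by omega⟩

end Challenge

theorem winG_iff (ks ke : ℕ) : ((ks, ke, 0) : Tok) ∈ WinG game ↔ ke ≤ ks :=
  ⟨le_of_winningConf, winningConf_of_le⟩

end CounterGame

/-- There is a parameterized vector game `G` such that
`(k_s, k_e, 0) ∈ Win(G)` iff `k_s ≥ k_e`; consequently `Win(G)` has no cutoff with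
respect to `(ℕ, ℕ, {0})`. -/
theorem no_cutoff_NN0 :
    ∃ G : PVG,
      (∀ ks ke : ℕ, ((ks, ke, 0) : Tok) ∈ WinG G ↔ ke ≤ ks) ∧
      ¬ ∃ k0 : Tok, IsCutoff Set.univ Set.univ {0} (WinG G) k0 :=
  ⟨CounterGame.game, CounterGame.winG_iff,
    fun ⟨k0, h⟩ => not_isCutoff_of_mem_iff CounterGame.winG_iff k0 h⟩

end PSyn
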